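/- arXiv:2601.22771 — 5 statements merged into one kernel-verified Lean document; each statement's English description precedes it below -/
import Mathlib

section
/- For a set function ν: 2^D → ℝ on a finite set D with Möbius transform Δ, the difference between the full effect and the pure effect of any feature i ∈ D equals the sum of Δ(S) over all subsets S of D containing i with |S| ≥ 2: φ_full(i) - φ_pure(i) = Σ_{S ⊆ D : i ∈ S, |S| ≥ 2} Δ(S). -/
open Finset

/-- Möbius transform of a set function `ν`. -/
noncomputable def mobius {ι : Type*} [DecidableEq ι] (ν : Finset ι → ℝ) (S : Finset ι) : ℝ :=
  ∑ L ∈ S.powerset, (-1 : ℝ) ^ (S.card - L.card) * ν L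

lemma sum_neg_one_pow_real {α : Type*} [DecidableEq α] (x : Finset α) :
    (∑ m ∈ x.powerset, (-1 : ℝ) ^ m.card) = if x = ∅ then 1 else 0 := by
  split_ifs with hx
  · subst hx; simp
  · have h0 := Finset.sum_powerset_neg_one_pow_card_of_nonempty
      (Finset.nonempty_iff_ne_empty.mpr hx)
    exact_mod_cast h0

lemma mobius_inversion {ι : Type*} [DecidableEq ι] (ν : Finset ι → ℝ) (T : Finset ι) :
    ∑ S ∈ T.powerset, mobius ν S = ν T := by
  unfold mobius
  rw [Finset.sum_comm' (s := T.powerset) (t := fun S => S.powerset)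
    (t' := T.powerset) (s' := fun L => T.powerset.filter (fun S => L ⊆ S))
    (by
      intro S L
      simp only [mem_powerset, mem_filter]
      constructor
      · rintro ⟨h1, h2⟩; exact ⟨⟨h1, h2⟩, h2.trans h1⟩
      · rintro ⟨⟨h1, h2⟩, _⟩; exact ⟨h1, h2⟩)]
  have key : ∀ L ∈ T.powerset,
      (∑ S ∈ T.powerset.filter (fun S => L ⊆ S), (-1 : ℝ) ^ (S.card - L.card) * ν L)
        = (if L = T then 1 else 0) * ν L := by
    intro L hL
    rw [mem_powerset] at hL
    have hbij : (∑ S ∈ T.powerset.filter (fun S => L ⊆ S), (-1 : ℝ) ^ (S.card - L.card))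
        = ∑ U ∈ (T \ L).powerset, (-1 : ℝ) ^ U.card := by
      apply Finset.sum_nbij' (i := fun S => S \ L) (j := fun U => L ∪ U)
      · intro S hS
        rw [mem_filter, mem_powerset] at hS
        rw [mem_powerset]
        exact sdiff_subset_sdiff hS.1 le_rfl
      · intro U hU
        rw [mem_powerset] at hU
        rw [mem_filter, mem_powerset]
        exact ⟨union_subset hL (hU.trans sdiff_subset), subset_union_left⟩
      · intro S hS
        rw [mem_filter, mem_powerset] at hS
        exact union_sdiff_of_subset hS.2
      · intro U hU
        rw [mem_powerset] at hU
        exact Finset.union_sdiff_cancel_left (Finset.disjoint_sdiff.mono_right hU)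
      · intro S hS
        rw [mem_filter, mem_powerset] at hS
        rw [card_sdiff_of_subset hS.2]
    rw [← Finset.sum_mul, hbij, sum_neg_one_pow_real]
    have hiff : T \ L = ∅ ↔ L = T := by
      rw [Finset.sdiff_eq_empty_iff_subset]
      exact ⟨fun h => Finset.Subset.antisymm hL h, fun h => h ▸ Finset.Subset.refl _⟩
    rw [if_congr hiff rfl rfl]
  rw [Finset.sum_congr rfl key]
  simp [ite_mul]

lemma mobius_singleton {ι : Type*} [DecidableEq ι] (ν : Finset ι → ℝ) (i : ι) :
    mobius ν {i} = ν {i} - ν ∅ := by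
  have h : ({i} : Finset ι).powerset = {∅, {i}} := by
    ext S; simp [Finset.subset_singleton_iff]
  rw [mobius, h, Finset.sum_pair (by exact fun h => Finset.singleton_ne_empty i h.symm)]
  simp
  ring

theorem full_sub_pure_eq_sum_higher_mobius {ι : Type*} [DecidableEq ι] (D : Finset ι)
    (ν : Finset ι → ℝ) (i : ι) (hi : i ∈ D) :
    (ν D - ν (D \ {i})) - (ν {i} - ν ∅)
      = ∑ S ∈ D.powerset.filter (fun S => i ∈ S ∧ 2 ≤ S.card), mobius ν S := by
  have hD := mobius_inversion ν D
  have hDi := mobius_inversion ν (D \ {i})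
  have hsplit : D.powerset.filter (fun S => ¬ i ∈ S) = (D \ {i}).powerset := by
    ext S
    simp [Finset.subset_sdiff, Finset.disjoint_singleton_right]
  have hsum : ∑ S ∈ D.powerset.filter (fun S => i ∈ S), mobius ν S
      = ν D - ν (D \ {i}) := by
    rw [← hD, ← hDi, ← Finset.sum_filter_add_sum_filter_not D.powerset (fun S => i ∈ S),
      hsplit]
    ring
  have h1 : D.powerset.filter (fun S => i ∈ S ∧ 2 ≤ S.card)
      = (D.powerset.filter (fun S => i ∈ S)).filter (fun S => 2 ≤ S.card) := by
    rw [Finset.filter_filter]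
  have h2 : (D.powerset.filter (fun S => i ∈ S)).filter (fun S => ¬ 2 ≤ S.card) = {{i}} := by
    ext S
    simp only [Finset.mem_filter, Finset.mem_powerset, Finset.mem_singleton, not_le]
    constructor
    · rintro ⟨⟨hSD, hiS⟩, hcard⟩
      have h1' : S.card = 1 := le_antisymm (by omega) (Finset.card_pos.mpr ⟨i, hiS⟩)
      obtain ⟨a, ha⟩ := Finset.card_eq_one.mp h1'
      subst ha
      rw [Finset.mem_singleton] at hiS
      rw [hiS]
    · rintro rfl
      simp [hi]
  have := Finset.sum_filter_add_sum_filter_not (D.powerset.filter (fun S => i ∈ S))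
    (fun S => 2 ≤ S.card) (mobius ν)
  rw [h2, Finset.sum_singleton, mobius_singleton, hsum] at this
  rw [h1]
  linarith
end

section
/- Let D be a finite set, ν: 2^D → ℝ, S ⊆ D, and let m be the Möbius transform of ν. Then the full joint effect ν(D) - ν(D \ S) minus the pure joint effect ν(S) - ν(∅) equals the sum of m(T) over all T ⊆ D such that T ∩ S ≠ ∅ and T ⊄ S, i.e. ν(D) - ν(D\S) - ν(S) + ν(∅) = Σ_{T ⊆ D : T ∩ S ≠ ∅ and T \ S ≠ ∅} m(T). -/
open Finset

lemma mobius_inv {ι : Type*} [DecidableEq ι] (ν : Finset ι → ℝ) (A : Finset ι) :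
    ∑ T ∈ A.powerset, mobius ν T = ν A := by
  unfold mobius
  rw [Finset.sum_comm' (t' := A.powerset)
      (s' := fun L => A.powerset.filter (fun T => L ⊆ T))
      (h := by intro T L; simp only [mem_filter, mem_powerset]; tauto)]
  · have key : ∀ L ∈ A.powerset,
        ∑ T ∈ A.powerset.filter (fun T => L ⊆ T), (-1 : ℝ) ^ (T.card - L.card) * ν L
          = if L = A then ν A else 0 := by
      intro L hL
      rw [mem_powerset] at hL
      have himg : A.powerset.filter (fun T => L ⊆ T)
          = (A \ L).powerset.image (fun U => L ∪ U) := by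
        ext T
        simp only [mem_filter, mem_powerset, mem_image]
        constructor
        · rintro ⟨hTA, hLT⟩
          exact ⟨T \ L, sdiff_subset_sdiff hTA Subset.rfl, by
            rw [union_sdiff_of_subset hLT]⟩
        · rintro ⟨U, hU, rfl⟩
          refine ⟨union_subset hL (hU.trans sdiff_subset), subset_union_left⟩
      rw [himg, Finset.sum_image]
      · have heq : ∀ U ∈ (A \ L).powerset,
            (-1 : ℝ) ^ ((L ∪ U).card - L.card) * ν L = (-1 : ℝ) ^ U.card * ν L := by
          intro U hU
          rw [mem_powerset] at hU
          have hdisj : Disjoint L U :=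
            disjoint_of_subset_right hU (disjoint_sdiff)
          rw [card_union_of_disjoint hdisj, Nat.add_sub_cancel_left]
        rw [Finset.sum_congr rfl heq, ← Finset.sum_mul]
        have h0 := @Finset.sum_powerset_neg_one_pow_card ι _ (A \ L)
        have : (∑ U ∈ (A \ L).powerset, (-1 : ℝ) ^ U.card)
            = if (A \ L) = ∅ then 1 else 0 := by
          calc (∑ U ∈ (A \ L).powerset, (-1 : ℝ) ^ U.card)
              = ((∑ U ∈ (A \ L).powerset, (-1 : ℤ) ^ U.card : ℤ) : ℝ) := by push_cast; rfl
            _ = _ := by rw [h0]; split <;> simp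
        rw [this]
        by_cases h : L = A
        · subst h; simp
        · have : A \ L ≠ ∅ := fun hAL =>
            h (subset_antisymm hL (sdiff_eq_empty_iff_subset.mp hAL))
          rw [if_neg this, if_neg h, zero_mul]
      · intro U hU V hV hUV
        rw [mem_coe, mem_powerset] at hU hV
        have hU' : Disjoint L U := disjoint_of_subset_right hU disjoint_sdiff
        have hV' : Disjoint L V := disjoint_of_subset_right hV disjoint_sdiff
        have := congrArg (fun W => W \ L) hUV
        simpa [union_sdiff_cancel_left hU', union_sdiff_cancel_left hV'] using this
    rw [Finset.sum_congr rfl key, Finset.sum_ite_eq' A.powerset A (fun _ => ν A),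
      if_pos (mem_powerset_self A)]

theorem full_joint_sub_pure_joint {ι : Type*} [DecidableEq ι] (D : Finset ι)
    (ν : Finset ι → ℝ) (S : Finset ι) (hS : S ⊆ D) :
    ν D - ν (D \ S) - ν S + ν ∅
      = ∑ T ∈ D.powerset.filter (fun T => (T ∩ S).Nonempty ∧ (T \ S).Nonempty),
          mobius ν T := by
  have hD := mobius_inv ν D
  have hDS := mobius_inv ν (D \ S)
  have hS' := mobius_inv ν S
  have hE := mobius_inv ν (∅ : Finset ι)
  -- split D.powerset by the predicate
  have hsplit : ∑ T ∈ D.powerset, mobius ν T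
      = (∑ T ∈ D.powerset.filter (fun T => (T ∩ S).Nonempty ∧ (T \ S).Nonempty), mobius ν T)
        + ∑ T ∈ D.powerset.filter (fun T => ¬((T ∩ S).Nonempty ∧ (T \ S).Nonempty)), mobius ν T :=
    (Finset.sum_filter_add_sum_filter_not _ _ _).symm
  -- the complement splits into T ⊆ D \ S or T ⊆ S
  have hcompl : ∑ T ∈ D.powerset.filter (fun T => ¬((T ∩ S).Nonempty ∧ (T \ S).Nonempty)), mobius ν T
      = ν (D \ S) + ν S - ν ∅ := by
    have h1 : D.powerset.filter (fun T => ¬((T ∩ S).Nonempty ∧ (T \ S).Nonempty))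
        = (D \ S).powerset ∪ S.powerset := by
      ext T
      simp only [mem_filter, mem_powerset, mem_union, not_and_or,
        Finset.not_nonempty_iff_eq_empty]
      constructor
      · rintro ⟨hTD, h | h⟩
        · left
          intro x hx
          rw [mem_sdiff]
          refine ⟨hTD hx, fun hxS => ?_⟩
          have : x ∈ T ∩ S := mem_inter.mpr ⟨hx, hxS⟩
          simp [h] at this
        · right
          intro x hx
          by_contra hxS
          have : x ∈ T \ S := mem_sdiff.mpr ⟨hx, hxS⟩
          simp [h] at this
      · rintro (h | h)
        · exact ⟨h.trans sdiff_subset, Or.inl (by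
            rw [← subset_empty]; intro x hx
            rw [mem_inter] at hx
            exact absurd (mem_sdiff.mp (h hx.1)).2 (fun h2 => h2 hx.2))⟩
        · exact ⟨h.trans hS, Or.inr (by
            rw [← subset_empty]; intro x hx
            rw [mem_sdiff] at hx
            exact absurd (h hx.1) hx.2)⟩
    have h2 : (D \ S).powerset ∩ S.powerset = ({∅} : Finset (Finset ι)) := by
      ext T
      simp only [mem_inter, mem_powerset, mem_singleton]
      constructor
      · rintro ⟨h1', h2'⟩
        rw [← subset_empty]
        intro x hx
        exact absurd (h2' hx) (mem_sdiff.mp (h1' hx)).2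
      · rintro rfl; simp
    have h3 := Finset.sum_union_inter (s₁ := (D \ S).powerset) (s₂ := S.powerset) (f := mobius ν)
    rw [h2, Finset.sum_singleton, hDS, hS'] at h3
    have h4 : mobius ν (∅ : Finset ι) = ν ∅ := by
      simpa [Finset.powerset_empty] using hE
    rw [h1]
    linarith
  linarith [hD, hsplit, hcompl]
end

section
/- Let X₁, ..., X_d be independent real-valued random variables and F square-integrable. Let f_S be the fANOVA components of F. Then for distinct subsets S ≠ T of D, the components are orthogonal: E[f_S(X) · f_T(X)] = 0. -/
/-!
By independence the law of `X` is the product measure `π = ⊗ μᵢ`, so everything can be computed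
on `π`. If `i ∈ S \ T`, then `f_T` does not depend on `xᵢ`, while `f_S` is an alternating sum of
differences `F_{A ∪ {i}} - F_A` with `i ∉ A`. Each difference is orthogonal to every
square-integrable `g` that does not depend on `xᵢ`: write `∫ F_A g dπ` as
`∫∫ F(x_A, y_{Aᶜ}) g(x) dπ(x) dπ(y)` and exchange the `i`-th coordinates of `x` and `y`, which
preserves `π ⊗ π` and leaves `g(x)` unchanged.
-/

open Finset MeasureTheory ProbabilityTheory

namespace FunctionalANOVA

lemma sq_integral_le_integral_sq {Ω : Type*} [MeasurableSpace Ω] {ν : Measure Ω}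
    [IsProbabilityMeasure ν] {h : Ω → ℝ} (hh : MemLp h 2 ν) :
    (∫ ω, h ω ∂ν) ^ 2 ≤ ∫ ω, h ω ^ 2 ∂ν := by
  have := variance_nonneg h ν
  rw [variance_eq_sub hh] at this
  simpa [sub_nonneg] using this

variable {ι α : Type*} [DecidableEq ι] [MeasurableSpace α]

def swapCoord (i : ι) : (ι → α) × (ι → α) ≃ᵐ (ι → α) × (ι → α) :=
  (MeasurableEquiv.arrowProdEquivProdArrow α α ι).symm.trans <|
    (MeasurableEquiv.piCongrRight fun j =>
      if j = i then MeasurableEquiv.prodComm else MeasurableEquiv.refl _).trans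
    (MeasurableEquiv.arrowProdEquivProdArrow α α ι)

lemma swapCoord_apply (i : ι) (p : (ι → α) × (ι → α)) :
    swapCoord i p = (Function.update p.1 i (p.2 i), Function.update p.2 i (p.1 i)) := by
  ext j <;> by_cases hj : j = i <;>
    simp [swapCoord, hj, MeasurableEquiv.arrowProdEquivProdArrow, Equiv.arrowProdEquivProdArrow,
      MeasurableEquiv.piCongrRight, Equiv.piCongrRight, MeasurableEquiv.prodComm]

lemma piecewise_swapCoord {A : Finset ι} {i : ι} (hi : i ∉ A) (p : (ι → α) × (ι → α)) :
    A.piecewise (swapCoord i p).1 (swapCoord i p).2 = (insert i A).piecewise p.1 p.2 := by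
  ext j
  rcases eq_or_ne j i with rfl | hj
  · simp [swapCoord_apply, hi]
  · by_cases hjA : j ∈ A <;> simp [swapCoord_apply, hj, hjA]

variable [Fintype ι] (μ : ι → Measure α)

/-- `partialMean μ F A` and `anovaComponent μ F S` are the paper's `F_A` and `f_S` for
`X ∼ Measure.pi μ`. -/
noncomputable def partialMean (F : (ι → α) → ℝ) (A : Finset ι) (x : ι → α) : ℝ :=
  ∫ y, F (A.piecewise x y) ∂Measure.pi μ

noncomputable def anovaComponent (F : (ι → α) → ℝ) (S : Finset ι) (x : ι → α) : ℝ :=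
  ∑ T ∈ S.powerset, (-1 : ℝ) ^ (#S - #T) * partialMean μ F T x

variable {μ} {F g : (ι → α) → ℝ}

lemma partialMean_update {A : Finset ι} {i : ι} (hi : i ∉ A) (x : ι → α) (c : α) :
    partialMean μ F A (Function.update x i c) = partialMean μ F A x := by
  have hx : ∀ y, A.piecewise (Function.update x i c) y = A.piecewise x y := fun y =>
    A.piecewise_congr (fun _ hj => Function.update_of_ne (ne_of_mem_of_not_mem hj hi) _ _)
      fun _ _ => rfl
  simp only [partialMean, hx]

lemma anovaComponent_update {S : Finset ι} {i : ι} (hi : i ∉ S) (x : ι → α) (c : α) :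
    anovaComponent μ F S (Function.update x i c) = anovaComponent μ F S x :=
  sum_congr rfl fun T hT => by rw [partialMean_update fun h => hi (mem_powerset.1 hT h)]

lemma anovaComponent_insert {S : Finset ι} {i : ι} (hi : i ∉ S) (x : ι → α) :
    anovaComponent μ F (insert i S) x = ∑ T ∈ S.powerset,
      (-1 : ℝ) ^ (#S - #T) * (partialMean μ F (insert i T) x - partialMean μ F T x) := by
  rw [anovaComponent, sum_powerset_insert hi, ← sum_add_distrib]
  refine sum_congr rfl fun T hT => ?_
  have hT' := mem_powerset.1 hT
  have hiT : i ∉ T := fun h => hi (hT' h)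
  rw [card_insert_of_notMem hi, card_insert_of_notMem hiT,
    Nat.sub_add_comm (card_le_card hT'), Nat.add_sub_add_right, pow_succ]
  ring

variable (μ) [∀ i, IsProbabilityMeasure (μ i)]

lemma measurePreserving_piecewise (A : Finset ι) :
    MeasurePreserving (fun p : (ι → α) × (ι → α) => A.piecewise p.1 p.2)
      ((Measure.pi μ).prod (Measure.pi μ)) (Measure.pi μ) := by
  have hcoord : ∀ j, MeasurePreserving (fun z : α × α => if j ∈ A then z.1 else z.2)
      ((μ j).prod (μ j)) (μ j) := by
    intro j
    by_cases hj : j ∈ A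
    · simpa [hj] using measurePreserving_fst
    · simpa [hj] using measurePreserving_snd
  exact (measurePreserving_pi _ μ hcoord).comp
    (measurePreserving_arrowProdEquivProdArrow α α ι μ μ).symm

lemma measurePreserving_swapCoord (i : ι) :
    MeasurePreserving (swapCoord i) ((Measure.pi μ).prod (Measure.pi μ))
      ((Measure.pi μ).prod (Measure.pi μ)) := by
  have he := measurePreserving_arrowProdEquivProdArrow α α ι μ μ
  refine he.comp ((measurePreserving_pi _ _ fun j => ?_).comp he.symm)
  by_cases hj : j = i
  · simp only [hj, if_true]
    exact Measure.measurePreserving_swap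
  · simpa [hj] using MeasurePreserving.id _

variable {μ}

lemma memLp_partialMean (hF : MemLp F 2 (Measure.pi μ)) (A : Finset ι) :
    MemLp (partialMean μ F A) 2 (Measure.pi μ) := by
  have hFA := hF.comp_measurePreserving (measurePreserving_piecewise μ A)
  have hsq := hFA.integrable_sq
  have hmeas : AEStronglyMeasurable (partialMean μ F A) (Measure.pi μ) :=
    hFA.aestronglyMeasurable.integral_prod_right'
  refine (memLp_two_iff_integrable_sq hmeas).2 <|
    hsq.integral_prod_left.mono' (hmeas.pow 2) ?_
  filter_upwards [hsq.prod_right_ae, hFA.aestronglyMeasurable.prodMk_left] with x hx hxm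
  have hsec : MemLp (fun y => F (A.piecewise x y)) 2 (Measure.pi μ) :=
    (memLp_two_iff_integrable_sq hxm).2 hx
  rw [Real.norm_eq_abs, abs_of_nonneg (sq_nonneg _)]
  exact sq_integral_le_integral_sq hsec

lemma integral_partialMean_mul (hF : MemLp F 2 (Measure.pi μ)) (hg : MemLp g 2 (Measure.pi μ))
    (A : Finset ι) :
    ∫ x, partialMean μ F A x * g x ∂Measure.pi μ =
      ∫ p, F (A.piecewise p.1 p.2) * g p.1 ∂(Measure.pi μ).prod (Measure.pi μ) := by
  have hint : Integrable (fun p => F (A.piecewise p.1 p.2) * g p.1)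
      ((Measure.pi μ).prod (Measure.pi μ)) :=
    (hF.comp_measurePreserving (measurePreserving_piecewise μ A)).integrable_mul
      (hg.comp_measurePreserving measurePreserving_fst)
  rw [integral_prod _ hint]
  simp only [partialMean, integral_mul_const]

lemma integral_partialMean_insert_mul {A : Finset ι} {i : ι} (hi : i ∉ A)
    (hF : MemLp F 2 (Measure.pi μ)) (hg : MemLp g 2 (Measure.pi μ))
    (hgi : ∀ x c, g (Function.update x i c) = g x) :
    ∫ x, partialMean μ F (insert i A) x * g x ∂Measure.pi μ =
      ∫ x, partialMean μ F A x * g x ∂Measure.pi μ := by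
  rw [integral_partialMean_mul hF hg, integral_partialMean_mul hF hg,
    ← (measurePreserving_swapCoord μ i).integral_comp' fun p => F (A.piecewise p.1 p.2) * g p.1]
  simp only [piecewise_swapCoord hi]
  simp only [swapCoord_apply, hgi]

lemma memLp_anovaComponent (hF : MemLp F 2 (Measure.pi μ)) (S : Finset ι) :
    MemLp (anovaComponent μ F S) 2 (Measure.pi μ) :=
  memLp_finsetSum _ fun T _ => (memLp_partialMean hF T).const_mul _

lemma integral_anovaComponent_mul_eq_zero {S : Finset ι} {i : ι} (hi : i ∈ S)
    (hF : MemLp F 2 (Measure.pi μ)) (hg : MemLp g 2 (Measure.pi μ))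
    (hgi : ∀ x c, g (Function.update x i c) = g x) :
    ∫ x, anovaComponent μ F S x * g x ∂Measure.pi μ = 0 := by
  have hint : ∀ T, Integrable (fun x => partialMean μ F T x * g x) (Measure.pi μ) :=
    fun T => (memLp_partialMean hF T).integrable_mul hg
  rw [← insert_erase hi]
  simp_rw [anovaComponent_insert (notMem_erase i S), sum_mul, mul_assoc, sub_mul]
  rw [integral_finsetSum]
  · refine sum_eq_zero fun T hT => ?_
    have hiT : i ∉ T := fun h => notMem_erase i S (mem_powerset.1 hT h)
    rw [integral_const_mul, integral_sub (hint _) (hint T),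
      integral_partialMean_insert_mul hiT hF hg hgi, sub_self, mul_zero]
  · exact fun T _ => ((hint _).sub (hint T)).const_mul _

lemma integral_anovaComponent_mul_anovaComponent {S T : Finset ι} (hST : S ≠ T)
    (hF : MemLp F 2 (Measure.pi μ)) :
    ∫ x, anovaComponent μ F S x * anovaComponent μ F T x ∂Measure.pi μ = 0 := by
  obtain ⟨i, hiS, hiT⟩ | ⟨i, hiT, hiS⟩ : (∃ i ∈ S, i ∉ T) ∨ ∃ i ∈ T, i ∉ S := by
    simp_rw [← not_subset, ← not_and_or]
    exact fun h => hST (subset_antisymm h.1 h.2)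
  · exact integral_anovaComponent_mul_eq_zero hiS hF (memLp_anovaComponent hF T)
      (anovaComponent_update hiT)
  · simp_rw [mul_comm (anovaComponent μ F S _)]
    exact integral_anovaComponent_mul_eq_zero hiT hF (memLp_anovaComponent hF S)
      (anovaComponent_update hiS)

end FunctionalANOVA

open FunctionalANOVA

/-- The fANOVA components of `F` are pairwise orthogonal under feature independence. -/
theorem fanova_components_orthogonal
    {Ω : Type*} [MeasureSpace Ω] [IsProbabilityMeasure (ℙ : Measure Ω)]
    (d : ℕ) (X : Ω → (Fin d → ℝ))
    (hX : ∀ i, Measurable fun ω => X ω i)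
    (hindep : iIndepFun (fun i ω => X ω i) ℙ)
    (F : (Fin d → ℝ) → ℝ) (hFmeas : Measurable F)
    (hF : MemLp (fun ω => F (X ω)) 2 ℙ)
    (Fmask : Finset (Fin d) → (Fin d → ℝ) → ℝ)
    (hmask : ∀ S x, Fmask S x = ∫ ω, F (fun i => if i ∈ S then x i else X ω i) ∂ℙ)
    (f : Finset (Fin d) → (Fin d → ℝ) → ℝ)
    (hf : ∀ S x, f S x = ∑ T ∈ S.powerset, (-1 : ℝ) ^ (S.card - T.card) * Fmask T x)
    (S T : Finset (Fin d)) (hST : S ≠ T) :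
    ∫ ω, f S (X ω) * f T (X ω) ∂ℙ = 0 := by
  set μ : Fin d → Measure ℝ := fun j => Measure.map (fun ω => X ω j) ℙ
  have : ∀ j, IsProbabilityMeasure (μ j) := fun j =>
    Measure.isProbabilityMeasure_map (hX j).aemeasurable
  have hXm : AEMeasurable X ℙ := (measurable_pi_lambda _ hX).aemeasurable
  have hlaw : Measure.map X ℙ = Measure.pi μ :=
    hindep.map_fun_eq_pi_map fun j => (hX j).aemeasurable
  have hFπ : MemLp F 2 (Measure.pi μ) :=
    hlaw ▸ (memLp_map_measure_iff hFmeas.aestronglyMeasurable hXm).2 hF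
  have hmean : Fmask = partialMean μ F := by
    ext A x
    rw [hmask, partialMean, ← hlaw, integral_map hXm]
    · rfl
    · exact (hFmeas.comp ((measurePreserving_piecewise μ A).measurable.comp
        measurable_prodMk_left)).aestronglyMeasurable
  have hcomp : f = anovaComponent μ F := by
    ext A x
    rw [hf, hmean, anovaComponent]
  subst hmean hcomp
  have hprod : AEStronglyMeasurable (fun x => anovaComponent μ F S x * anovaComponent μ F T x)
      (Measure.map X ℙ) :=
    hlaw ▸ ((memLp_anovaComponent hFπ S).integrable_mul (memLp_anovaComponent hFπ T)).1
  rw [← integral_map hXm hprod, hlaw]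
  exact integral_anovaComponent_mul_anovaComponent hST hFπ
end

section
/- Let X₁, ..., X_d be independent random variables, F square-integrable, and f_S the fANOVA components. Then the variance decomposes: Var[F(X)] = Σ_{S ⊆ D, S ≠ ∅} Var[f_S(X)]. -/
/-!
Under independence the law of `X` is the product measure `Measure.pi μ`, and `Fmask S x` integrates
out the coordinates outside `S`. Write `M_S` for it and `b W = E[M_W²]`. The key identity is
`E[M_U M_V] = b (U ∩ V)`. The fANOVA component `f_S` is the Möbius transform of `T ↦ M_T` on the
Boolean lattice, so this identity gives orthogonality, `E[f_S f_T] = 0` for `S ≠ T`, together with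
`Var f_S = (Möbius transform of b) S` for `S ≠ ∅`. By Möbius inversion these variances sum to
`b D - b ∅ = E[F²] - E[F]² = Var F`.
-/

open Finset MeasureTheory ProbabilityTheory

namespace Finset

variable {α R : Type*} [DecidableEq α] [CommRing R]

def powersetMobius (g : Finset α → R) (S : Finset α) : R :=
  ∑ T ∈ S.powerset, (-1) ^ (#S - #T) * g T

theorem sum_Icc_neg_one_pow_card_sub_card_bot {W S : Finset α} (h : W ⊆ S) :
    ∑ U ∈ Icc W S, (-1 : R) ^ (#U - #W) = if W = S then 1 else 0 := by
  have hdisj : ∀ V ∈ (S \ W).powerset, Disjoint W V := fun V hV =>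
    disjoint_of_subset_right (mem_powerset.1 hV) disjoint_sdiff
  have hinj : Set.InjOn (W ∪ ·) (S \ W).powerset := fun V₁ h₁ V₂ h₂ hV => by
    simpa [union_sdiff_cancel_left (hdisj V₁ h₁), union_sdiff_cancel_left (hdisj V₂ h₂)]
      using congrArg (· \ W) hV
  have hcard : ∀ V ∈ (S \ W).powerset, #(W ∪ V) - #W = #V := fun V hV => by
    rw [card_union_of_disjoint (hdisj V hV)]; omega
  have hsum := congrArg (Int.cast : ℤ → R) (sum_powerset_neg_one_pow_card (x := S \ W))
  push_cast at hsum
  rw [Icc_eq_image_powerset h, sum_image hinj, sum_congr rfl fun V hV => by rw [hcard V hV], hsum]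
  simp only [sdiff_eq_empty_iff_subset]
  exact if_congr ⟨subset_antisymm h, fun e => e ▸ subset_rfl⟩ rfl rfl

theorem sum_Icc_neg_one_pow_card_top_sub_card {W S : Finset α} (h : W ⊆ S) :
    ∑ U ∈ Icc W S, (-1 : R) ^ (#S - #U) = if W = S then 1 else 0 := by
  have hsign : ∀ U ∈ Icc W S, (-1 : R) ^ (#S - #U) = (-1) ^ (#S - #W) * (-1) ^ (#U - #W) :=
    fun U hU => by
      obtain ⟨hWU, hUS⟩ := mem_Icc.1 hU
      have := card_le_card hWU; have := card_le_card hUS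
      rw [← pow_add, show #S - #W + (#U - #W) = #S - #U + 2 * (#U - #W) by omega, pow_add,
        pow_mul]
      simp
  rw [sum_congr rfl hsign, ← mul_sum, sum_Icc_neg_one_pow_card_sub_card_bot h]
  split_ifs with hWS <;> simp [hWS]

theorem sum_powerset_ite_subset_neg_one_pow (S W : Finset α) :
    ∑ U ∈ S.powerset, (if W ⊆ U then (-1 : R) ^ (#S - #U) else 0) = if W = S then 1 else 0 := by
  rw [← sum_filter, ← Icc_eq_filter_powerset]
  by_cases h : W ⊆ S
  · exact sum_Icc_neg_one_pow_card_top_sub_card h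
  · rw [Icc_eq_empty h, sum_empty, if_neg fun (e : W = S) => h (e ▸ subset_rfl)]

theorem sum_powerset_powersetMobius (g : Finset α → R) (A : Finset α) :
    ∑ S ∈ A.powerset, powersetMobius g S = g A := by
  unfold powersetMobius
  rw [sum_comm' (t' := A.powerset) (s' := fun T => Icc T A) fun S T => by
    simp only [mem_powerset, mem_Icc]
    exact ⟨fun ⟨hSA, hTS⟩ => ⟨⟨hTS, hSA⟩, hTS.trans hSA⟩, fun ⟨⟨hTS, hSA⟩, _⟩ => ⟨hSA, hTS⟩⟩]
  simp_rw [← sum_mul]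
  rw [sum_congr rfl fun T hT => by rw [sum_Icc_neg_one_pow_card_sub_card_bot (mem_powerset.1 hT)]]
  simp

theorem powersetMobius_const (c : R) (S : Finset α) :
    powersetMobius (fun _ => c) S = if S = ∅ then c else 0 := by
  have h := sum_powerset_ite_subset_neg_one_pow (R := R) S ∅
  simp only [empty_subset, if_true, eq_comm (a := ∅)] at h
  rw [powersetMobius, ← sum_mul, h, ite_mul, one_mul, zero_mul]

theorem sum_powerset_mul_sum_powerset_inter (b : Finset α → R) (S T : Finset α) :
    ∑ U ∈ S.powerset, ∑ V ∈ T.powerset, (-1) ^ (#S - #U) * (-1) ^ (#T - #V) * b (U ∩ V)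
      = if S = T then powersetMobius b S else 0 := by
  set c := powersetMobius b
  set A : Finset α → Finset α → R := fun W U => if W ⊆ U then (-1) ^ (#S - #U) else 0
  set B : Finset α → Finset α → R := fun W V => if W ⊆ V then (-1) ^ (#T - #V) else 0
  have hb : ∀ U ∈ S.powerset, ∀ V, b (U ∩ V)
      = ∑ W ∈ S.powerset, if W ⊆ U ∧ W ⊆ V then c W else 0 := fun U hU V => by
    rw [← sum_filter, ← sum_powerset_powersetMobius b (U ∩ V)]
    congr 1
    ext W
    simp only [mem_filter, mem_powerset, subset_inter_iff]
    exact ⟨fun h => ⟨h.1.trans (mem_powerset.1 hU), h⟩, And.right⟩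
  calc _ = ∑ U ∈ S.powerset, ∑ V ∈ T.powerset, ∑ W ∈ S.powerset, A W U * B W V * c W :=
        sum_congr rfl fun U hU => sum_congr rfl fun V _ => by
          rw [hb U hU V, mul_sum]
          refine sum_congr rfl fun W _ => ?_
          by_cases hWU : W ⊆ U <;> by_cases hWV : W ⊆ V <;> simp [A, B, hWU, hWV]
    _ = ∑ U ∈ S.powerset, ∑ W ∈ S.powerset, ∑ V ∈ T.powerset, A W U * B W V * c W :=
        sum_congr rfl fun _ _ => sum_comm
    _ = ∑ W ∈ S.powerset, (∑ U ∈ S.powerset, A W U) * (∑ V ∈ T.powerset, B W V) * c W := by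
        rw [sum_comm]
        refine sum_congr rfl fun W _ => ?_
        rw [sum_mul_sum, sum_mul]
        simp only [sum_mul]
    _ = ∑ W ∈ S.powerset, (if W = S then 1 else 0) * (if W = T then 1 else 0) * c W := by
        simp only [A, B, sum_powerset_ite_subset_neg_one_pow]
    _ = _ := by
        by_cases hST : S = T
        · subst hST; simp
        · simp [hST, Ne.symm hST]

end Finset

theorem MeasureTheory.MeasurePreserving.integral_comp_of_aestronglyMeasurable
    {α β G : Type*} [MeasurableSpace α] [MeasurableSpace β] [NormedAddCommGroup G]
    [NormedSpace ℝ G] {μ : Measure α} {ν : Measure β} {f : α → β} (hf : MeasurePreserving f μ ν)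
    {g : β → G} (hg : AEStronglyMeasurable g ν) : ∫ x, g (f x) ∂μ = ∫ y, g y ∂ν := by
  rw [← hf.map_eq] at hg ⊢
  exact (integral_map hf.aemeasurable hg).symm

theorem sq_integral_le_integral_sq {β : Type*} [MeasurableSpace β] {ν : Measure β}
    [IsProbabilityMeasure ν] {g : β → ℝ} (hg : MemLp g 2 ν) :
    (∫ x, g x ∂ν) ^ 2 ≤ ∫ x, g x ^ 2 ∂ν := by
  have h := variance_nonneg g ν
  rw [variance_eq_sub hg] at h
  simp only [Pi.pow_apply] at h
  linarith

theorem MeasureTheory.Measure.ext_of_pi_prod_pi {ι : Type*} [Finite ι] {α β : ι → Type*}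
    [∀ i, MeasurableSpace (α i)] [∀ i, MeasurableSpace (β i)]
    {μ ν : Measure ((∀ i, α i) × (∀ i, β i))} [IsFiniteMeasure μ]
    (h : ∀ (s : ∀ i, Set (α i)) (t : ∀ i, Set (β i)), (∀ i, MeasurableSet (s i)) →
      (∀ i, MeasurableSet (t i)) →
        μ (Set.univ.pi s ×ˢ Set.univ.pi t) = ν (Set.univ.pi s ×ˢ Set.univ.pi t)) :
    μ = ν := by
  refine ext_of_generate_finite _ (generateFrom_eq_prod generateFrom_pi generateFrom_pi
    (.pi fun _ => isCountablySpanning_measurableSet)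
    (.pi fun _ => isCountablySpanning_measurableSet)).symm (isPiSystem_pi.prod isPiSystem_pi) ?_ ?_
  · rintro _ ⟨_, ⟨s, hs, rfl⟩, _, ⟨t, ht, rfl⟩, rfl⟩
    exact h s t (fun i => hs i (Set.mem_univ i)) fun i => ht i (Set.mem_univ i)
  · simpa using h (fun _ => Set.univ) (fun _ => Set.univ) (fun _ => .univ) fun _ => .univ

section Gluing

variable {ι : Type*} [DecidableEq ι] {α : ι → Type*} [∀ i, MeasurableSpace (α i)]

theorem measurable_piecewise_prod (S : Finset ι) :
    Measurable fun p : (∀ i, α i) × (∀ i, α i) => S.piecewise p.1 p.2 :=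
  measurable_pi_lambda _ fun i => by
    by_cases hi : i ∈ S <;> simp only [Finset.piecewise, hi, if_true, if_false] <;> fun_prop

def piecewisePair (U V : Finset ι) (p : (∀ i, α i) × (∀ i, α i) × (∀ i, α i)) :
    (∀ i, α i) × (∀ i, α i) :=
  (U.piecewise p.1 p.2.1, V.piecewise p.1 p.2.2)

theorem measurable_piecewisePair (U V : Finset ι) :
    Measurable (piecewisePair (α := α) U V) :=
  ((measurable_piecewise_prod U).comp (measurable_fst.prodMk measurable_snd.fst)).prodMk
    ((measurable_piecewise_prod V).comp (measurable_fst.prodMk measurable_snd.snd))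

variable [Fintype ι] (μ : ∀ i, Measure (α i))

noncomputable def piecewisePairLaw (U V : Finset ι) : Measure ((∀ i, α i) × (∀ i, α i)) :=
  ((Measure.pi μ).prod ((Measure.pi μ).prod (Measure.pi μ))).map (piecewisePair U V)

variable [∀ i, IsProbabilityMeasure (μ i)]

instance (U V : Finset ι) : IsProbabilityMeasure (piecewisePairLaw μ U V) :=
  Measure.isProbabilityMeasure_map (measurable_piecewisePair U V).aemeasurable

theorem measurePreserving_piecewise_prod (S : Finset ι) :
    MeasurePreserving (fun p : (∀ i, α i) × (∀ i, α i) => S.piecewise p.1 p.2)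
      ((Measure.pi μ).prod (Measure.pi μ)) (Measure.pi μ) where
  measurable := measurable_piecewise_prod S
  map_eq := by
    refine (Measure.pi_eq fun s hs => ?_).symm
    have hpre : (fun p : (∀ i, α i) × (∀ i, α i) => S.piecewise p.1 p.2) ⁻¹' Set.univ.pi s
        = Set.univ.pi (S.piecewise s fun _ => Set.univ) ×ˢ
          Set.univ.pi (S.piecewise (fun _ => Set.univ) s) := by
      ext p
      simp only [Set.mem_preimage, Set.mem_prod, Set.mem_univ_pi, ← forall_and]
      refine forall_congr' fun i => ?_
      by_cases hi : i ∈ S <;> simp [hi]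
    rw [Measure.map_apply (measurable_piecewise_prod S) (.univ_pi hs), hpre, Measure.prod_prod,
      Measure.pi_pi, Measure.pi_pi, ← Finset.prod_mul_distrib]
    refine Finset.prod_congr rfl fun i _ => ?_
    by_cases hi : i ∈ S <;> simp [hi]

theorem piecewisePairLaw_apply_pi_prod_pi (U V : Finset ι) {s t : ∀ i, Set (α i)}
    (hs : ∀ i, MeasurableSet (s i)) (ht : ∀ i, MeasurableSet (t i)) :
    piecewisePairLaw μ U V (Set.univ.pi s ×ˢ Set.univ.pi t)
      = ∏ i, if i ∈ U ∩ V then μ i (s i ∩ t i) else μ i (s i) * μ i (t i) := by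
  have hpre : piecewisePair U V ⁻¹' (Set.univ.pi s ×ˢ Set.univ.pi t)
      = Set.univ.pi (fun i => U.piecewise s (fun _ => Set.univ) i ∩
          V.piecewise t (fun _ => Set.univ) i) ×ˢ
        (Set.univ.pi (U.piecewise (fun _ => Set.univ) s) ×ˢ
          Set.univ.pi (V.piecewise (fun _ => Set.univ) t)) := by
    ext ⟨x, y, z⟩
    simp only [piecewisePair, Set.mem_preimage, Set.mem_prod, Set.mem_univ_pi, Set.mem_inter_iff,
      ← forall_and]
    refine forall_congr' fun i => ?_
    by_cases hU : i ∈ U <;> by_cases hV : i ∈ V <;> simp [hU, hV, and_comm]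
  rw [piecewisePairLaw, Measure.map_apply (measurable_piecewisePair U V)
    ((MeasurableSet.univ_pi hs).prod (.univ_pi ht)), hpre, Measure.prod_prod, Measure.prod_prod, Measure.pi_pi, Measure.pi_pi,
    Measure.pi_pi, ← Finset.prod_mul_distrib, ← Finset.prod_mul_distrib]
  refine Finset.prod_congr rfl fun i _ => ?_
  by_cases hU : i ∈ U <;> by_cases hV : i ∈ V <;> simp [hU, hV, mul_comm]

/-- Both points share the coordinates in `U ∩ V`; all their other coordinates are independent. -/
theorem piecewisePairLaw_inter (U V : Finset ι) :
    piecewisePairLaw μ (U ∩ V) (U ∩ V) = piecewisePairLaw μ U V :=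
  Measure.ext_of_pi_prod_pi fun s t hs ht => by
    rw [piecewisePairLaw_apply_pi_prod_pi μ _ _ hs ht,
      piecewisePairLaw_apply_pi_prod_pi μ U V hs ht, Finset.inter_self]

theorem measurePreserving_fst_piecewisePairLaw (U V : Finset ι) :
    MeasurePreserving Prod.fst (piecewisePairLaw μ U V) (Measure.pi μ) where
  measurable := measurable_fst
  map_eq := by
    rw [piecewisePairLaw, Measure.map_map measurable_fst (measurable_piecewisePair U V)]
    exact ((measurePreserving_piecewise_prod μ U).comp
      ((MeasurePreserving.id _).prod measurePreserving_fst)).map_eq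

theorem measurePreserving_snd_piecewisePairLaw (U V : Finset ι) :
    MeasurePreserving Prod.snd (piecewisePairLaw μ U V) (Measure.pi μ) where
  measurable := measurable_snd
  map_eq := by
    rw [piecewisePairLaw, Measure.map_map measurable_snd (measurable_piecewisePair U V)]
    exact ((measurePreserving_piecewise_prod μ V).comp
      ((MeasurePreserving.id _).prod measurePreserving_snd)).map_eq

end Gluing

section CoordCondExp

variable {ι : Type*} [Fintype ι] [DecidableEq ι] {α : ι → Type*} [∀ i, MeasurableSpace (α i)]
  (μ : ∀ i, Measure (α i))

/-- Under `Measure.pi μ` this is a version of `E[F | x_S]`. -/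
noncomputable def coordCondExp (F : (∀ i, α i) → ℝ) (S : Finset ι) (x : ∀ i, α i) : ℝ :=
  ∫ y, F (S.piecewise x y) ∂Measure.pi μ

variable {μ} {F : (∀ i, α i) → ℝ}

theorem coordCondExp_empty : coordCondExp μ F ∅ = fun _ => ∫ y, F y ∂Measure.pi μ := by
  funext x
  simp [coordCondExp]

variable [∀ i, IsProbabilityMeasure (μ i)]

theorem coordCondExp_univ : coordCondExp μ F Finset.univ = F := by
  funext x
  simp [coordCondExp, Finset.piecewise_univ]

theorem aestronglyMeasurable_coordCondExp (hF : AEStronglyMeasurable F (Measure.pi μ))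
    (S : Finset ι) : AEStronglyMeasurable (coordCondExp μ F S) (Measure.pi μ) :=
  (hF.comp_measurePreserving (measurePreserving_piecewise_prod μ S)).integral_prod_right'

theorem integral_coordCondExp (hF : Integrable F (Measure.pi μ)) (S : Finset ι) :
    ∫ x, coordCondExp μ F S x ∂Measure.pi μ = ∫ x, F x ∂Measure.pi μ := by
  have hS := measurePreserving_piecewise_prod μ S
  rw [← hS.integral_comp_of_aestronglyMeasurable hF.aestronglyMeasurable,
    integral_prod (fun p => F (S.piecewise p.1 p.2)) (hS.integrable_comp_of_integrable hF)]
  rfl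

theorem memLp_coordCondExp (hF : MemLp F 2 (Measure.pi μ)) (S : Finset ι) :
    MemLp (coordCondExp μ F S) 2 (Measure.pi μ) := by
  have hS := measurePreserving_piecewise_prod μ S
  have hG := hF.comp_measurePreserving hS
  have hM := aestronglyMeasurable_coordCondExp hF.aestronglyMeasurable S
  refine (memLp_two_iff_integrable_sq hM).2 (hG.integrable_sq.integral_prod_left.mono'
    (hM.pow 2) ?_)
  filter_upwards [hG.aestronglyMeasurable.prodMk_left, hG.integrable_sq.prod_right_ae]
    with x hmeas hsq
  rw [Real.norm_eq_abs, abs_of_nonneg (sq_nonneg _)]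
  exact sq_integral_le_integral_sq ((memLp_two_iff_integrable_sq hmeas).2 hsq)

theorem integral_coordCondExp_mul (hF : MemLp F 2 (Measure.pi μ)) (U V : Finset ι) :
    ∫ x, coordCondExp μ F U x * coordCondExp μ F V x ∂Measure.pi μ
      = ∫ q, F q.1 * F q.2 ∂piecewisePairLaw μ U V := by
  have hFF : Integrable (fun q : (∀ i, α i) × (∀ i, α i) => F q.1 * F q.2)
      (piecewisePairLaw μ U V) :=
    (hF.comp_measurePreserving (measurePreserving_fst_piecewisePairLaw μ U V)).integrable_mul
      (hF.comp_measurePreserving (measurePreserving_snd_piecewisePairLaw μ U V))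
  have hmeas := (measurable_piecewisePair (α := α) U V).aemeasurable
    (μ := (Measure.pi μ).prod ((Measure.pi μ).prod (Measure.pi μ)))
  rw [piecewisePairLaw, integral_map hmeas hFF.aestronglyMeasurable,
    integral_prod (fun p => F (piecewisePair U V p).1 * F (piecewisePair U V p).2)
      ((integrable_map_measure hFF.aestronglyMeasurable hmeas).1 hFF)]
  exact integral_congr_ae (.of_forall fun x => (integral_prod_mul _ _).symm)

theorem integral_coordCondExp_mul_eq_inter (hF : MemLp F 2 (Measure.pi μ)) (U V : Finset ι) :
    ∫ x, coordCondExp μ F U x * coordCondExp μ F V x ∂Measure.pi μ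
      = ∫ x, coordCondExp μ F (U ∩ V) x * coordCondExp μ F (U ∩ V) x ∂Measure.pi μ := by
  rw [integral_coordCondExp_mul hF, integral_coordCondExp_mul hF, piecewisePairLaw_inter]

end CoordCondExp

section Fanova

variable {ι : Type*} [Fintype ι] [DecidableEq ι] {α : ι → Type*} [∀ i, MeasurableSpace (α i)]
  (μ : ∀ i, Measure (α i))

noncomputable def fanovaComponent (F : (∀ i, α i) → ℝ) (S : Finset ι) (x : ∀ i, α i) : ℝ :=
  powersetMobius (fun T => coordCondExp μ F T x) S

variable {μ} [∀ i, IsProbabilityMeasure (μ i)] {F : (∀ i, α i) → ℝ}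

theorem memLp_fanovaComponent (hF : MemLp F 2 (Measure.pi μ)) (S : Finset ι) :
    MemLp (fanovaComponent μ F S) 2 (Measure.pi μ) :=
  memLp_finsetSum _ fun T _ => (memLp_coordCondExp hF T).const_mul _

theorem integral_fanovaComponent (hF : MemLp F 2 (Measure.pi μ)) (S : Finset ι) :
    ∫ x, fanovaComponent μ F S x ∂Measure.pi μ = if S = ∅ then ∫ x, F x ∂Measure.pi μ else 0 := by
  simp only [fanovaComponent, powersetMobius]
  rw [integral_finsetSum _ fun T _ =>
    ((memLp_coordCondExp hF T).integrable one_le_two).const_mul _]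
  simp_rw [integral_const_mul, integral_coordCondExp (hF.integrable one_le_two)]
  exact powersetMobius_const _ S

theorem integral_fanovaComponent_mul (hF : MemLp F 2 (Measure.pi μ)) (S T : Finset ι) :
    ∫ x, fanovaComponent μ F S x * fanovaComponent μ F T x ∂Measure.pi μ
      = if S = T then
          powersetMobius (fun W => ∫ x, coordCondExp μ F W x * coordCondExp μ F W x ∂Measure.pi μ) S
        else 0 := by
  have hint : ∀ U V, Integrable (fun x => coordCondExp μ F U x * coordCondExp μ F V x)
      (Measure.pi μ) := fun U V =>
    (memLp_coordCondExp hF U).integrable_mul (memLp_coordCondExp hF V)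
  have hexpand : ∀ x, fanovaComponent μ F S x * fanovaComponent μ F T x
      = ∑ U ∈ S.powerset, ∑ V ∈ T.powerset, (-1) ^ (#S - #U) * (-1) ^ (#T - #V) *
          (coordCondExp μ F U x * coordCondExp μ F V x) := fun x => by
    simp only [fanovaComponent, powersetMobius, sum_mul_sum]
    exact sum_congr rfl fun U _ => sum_congr rfl fun V _ => by ring
  rw [← sum_powerset_mul_sum_powerset_inter, integral_congr_ae (.of_forall hexpand),
    integral_finsetSum _ fun U _ => integrable_finsetSum _ fun V _ => (hint U V).const_mul _]
  refine sum_congr rfl fun U _ => ?_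
  rw [integral_finsetSum _ fun V _ => (hint U V).const_mul _]
  exact sum_congr rfl fun V _ => by
    rw [integral_const_mul, integral_coordCondExp_mul_eq_inter hF]

theorem variance_fanovaComponent (hF : MemLp F 2 (Measure.pi μ)) {S : Finset ι}
    (hS : S.Nonempty) :
    Var[fanovaComponent μ F S; Measure.pi μ]
      = powersetMobius
          (fun W => ∫ x, coordCondExp μ F W x * coordCondExp μ F W x ∂Measure.pi μ) S := by
  rw [variance_eq_sub (memLp_fanovaComponent hF S), integral_fanovaComponent hF,
    if_neg hS.ne_empty]
  simp only [Pi.pow_apply, sq]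
  rw [integral_fanovaComponent_mul hF, if_pos rfl, mul_zero, sub_zero]

theorem variance_eq_sum_variance_fanovaComponent (hF : MemLp F 2 (Measure.pi μ)) :
    Var[F; Measure.pi μ]
      = ∑ S ∈ (Finset.univ : Finset ι).powerset.filter (fun S => S.Nonempty),
          Var[fanovaComponent μ F S; Measure.pi μ] := by
  have hfilter : (Finset.univ : Finset ι).powerset.filter (fun S => S.Nonempty)
      = (Finset.univ : Finset ι).powerset.erase ∅ := by
    ext S
    simp [nonempty_iff_ne_empty, and_comm]
  rw [sum_congr rfl fun S hS => variance_fanovaComponent hF (mem_filter.1 hS).2, hfilter,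
    sum_erase_eq_sub (empty_mem_powerset _), sum_powerset_powersetMobius, variance_eq_sub hF]
  simp [powersetMobius, coordCondExp_univ, coordCondExp_empty, sq]

end Fanova

/-- Sobol-Hoeffding variance decomposition of `F(X)` under feature independence. -/
theorem fanova_variance_decomposition
    {Ω : Type*} [MeasureSpace Ω] [IsProbabilityMeasure (ℙ : Measure Ω)]
    (d : ℕ) (X : Ω → (Fin d → ℝ))
    (hX : ∀ i, Measurable fun ω => X ω i)
    (hindep : iIndepFun (fun i ω => X ω i) ℙ)
    (F : (Fin d → ℝ) → ℝ) (hFmeas : Measurable F)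
    (hF : MemLp (fun ω => F (X ω)) 2 ℙ)
    (Fmask : Finset (Fin d) → (Fin d → ℝ) → ℝ)
    (hmask : ∀ S x, Fmask S x = ∫ ω, F (fun i => if i ∈ S then x i else X ω i) ∂ℙ)
    (f : Finset (Fin d) → (Fin d → ℝ) → ℝ)
    (hf : ∀ S x, f S x = ∑ T ∈ S.powerset, (-1 : ℝ) ^ (S.card - T.card) * Fmask T x) :
    variance (fun ω => F (X ω)) ℙ
      = ∑ S ∈ (Finset.univ : Finset (Fin d)).powerset.filter (fun S => S.Nonempty),
          variance (fun ω => f S (X ω)) ℙ := by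
  set μ : Fin d → Measure ℝ := fun i => (ℙ : Measure Ω).map fun ω => X ω i
  have : ∀ i, IsProbabilityMeasure (μ i) := fun i =>
    Measure.isProbabilityMeasure_map (hX i).aemeasurable
  have hlaw : MeasurePreserving X ℙ (Measure.pi μ) :=
    ⟨measurable_pi_lambda _ hX, hindep.map_fun_eq_pi_map fun i => (hX i).aemeasurable⟩
  have hFπ : MemLp F 2 (Measure.pi μ) := by
    rw [← hlaw.map_eq]
    exact (memLp_map_measure_iff hFmeas.aestronglyMeasurable hlaw.aemeasurable).2 hF
  have hFmask : Fmask = coordCondExp μ F := funext fun S => funext fun x =>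
    (hmask S x).trans <| hlaw.integral_comp_of_aestronglyMeasurable
      (g := fun y => F (S.piecewise x y))
      (hFmeas.comp ((measurable_piecewise_prod S).comp measurable_prodMk_left)).aestronglyMeasurable
  have hfcomp : f = fanovaComponent μ F := funext fun S => funext fun x => by
    rw [hf, hFmask]; rfl
  rw [hlaw.variance_fun_comp hFmeas.aemeasurable, variance_eq_sum_variance_fanovaComponent hFπ,
    hfcomp]
  exact sum_congr rfl fun S _ => (hlaw.variance_fun_comp
    (memLp_fanovaComponent hFπ S).aestronglyMeasurable.aemeasurable).symm
end

section
/- Let X₃ uniform on {-1, 1} and X₄ with conditional law (X₄ | X₃ = x₃) ~ N(x₃, 1), and f(x₃, x₄) = x₃ + 2x₄. The marginal pure local effect of feature 4 is φ_m(x) = E_{X₃}[f(X₃, x₄)] - E[f(X₃,X₄)] = 2x₄, while the conditional pure local effect is φ_c(x) = E[f(X₃, x₄) | X₄ = x₄] - E[f] = 2x₄ + E[X₃ | X₄ = x₄], and E[X₃ | X₄ = x₄] = tanh(x₄). Restricted to the region {x₃ = 1}, both effects equal 2x₄ + 1 - E^Ω[f] up to the common regional centering, i.e., the marginal and conditional pure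 effects agree on the region. -/
open MeasureTheory ProbabilityTheory Real

/-- Standard normal density. -/
noncomputable def stdNormalPdf (y : ℝ) : ℝ :=
  Real.exp (-(y ^ 2) / 2) / Real.sqrt (2 * Real.pi)

/-- Law of `X₃`: uniform on `{-1, 1}`. -/
noncomputable def lawX3 : Measure ℝ :=
  (1 / 2 : ENNReal) • Measure.dirac (-1) + (1 / 2 : ENNReal) • Measure.dirac 1

/-- Joint law of `(X₃, X₄)` with `X₄ | X₃ = s ~ N(s, 1)`. -/
noncomputable def lawX34 : Measure (ℝ × ℝ) :=
  (1 / 2 : ENNReal) • ((Measure.dirac (-1 : ℝ)).prod (gaussianReal (-1) 1))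
    + (1 / 2 : ENNReal) • ((Measure.dirac (1 : ℝ)).prod (gaussianReal 1 1))

/-- The model `f(x₃, x₄) = x₃ + 2 x₄`. -/
def gmodel (x₃ x₄ : ℝ) : ℝ := x₃ + 2 * x₄

/-- `E[X₃ | X₄ = x₄]` computed from the Gaussian mixture densities. -/
noncomputable def condExpX3 (x₄ : ℝ) : ℝ :=
  (stdNormalPdf (x₄ - 1) - stdNormalPdf (x₄ + 1))
    / (stdNormalPdf (x₄ - 1) + stdNormalPdf (x₄ + 1))

/-! Both laws are equal-weight mixtures, so each expectation is the average of two component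
expectations; with `x₃` fixed, `E[x₃ + 2 X₄] = x₃ + 2 m` for `X₄ ~ N(m, v)`, which makes
`E[f] = 0` under the joint law. Completing the square, `φ(x₄ ∓ 1) = φ(x₄) e^{-1/2} e^{± x₄}`,
so the posterior mean of `X₃` is `(e^{x₄} - e^{-x₄}) / (e^{x₄} + e^{-x₄}) = tanh x₄`. -/

open scoped ENNReal NNReal

section HalfMixture

variable {α : Type*} [MeasurableSpace α] {μ ν : Measure α} {f : α → ℝ}

lemma integral_half_smul_add_half_smul (hμ : Integrable f μ) (hν : Integrable f ν) :
    ∫ x, f x ∂((1 / 2 : ℝ≥0∞) • μ + (1 / 2 : ℝ≥0∞) • ν) = ((∫ x, f x ∂μ) + ∫ x, f x ∂ν) / 2 := by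
  rw [integral_add_measure (hμ.smul_measure (by simp)) (hν.smul_measure (by simp)),
    integral_smul_measure, integral_smul_measure]
  simp only [one_div, ENNReal.toReal_inv, ENNReal.toReal_ofNat, smul_eq_mul]
  ring

end HalfMixture

section DiracProd

variable {α β : Type*} [MeasurableSpace α] [MeasurableSpace β] {E : Type*} [NormedAddCommGroup E]
  {f : α × β → E} (a : α) (ν : Measure β) [SFinite ν]

lemma integrable_dirac_prod_iff (hf : StronglyMeasurable f) :
    Integrable f ((Measure.dirac a).prod ν) ↔ Integrable (fun y ↦ f (a, y)) ν := by
  rw [Measure.dirac_prod, integrable_map_measure hf.aestronglyMeasurable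
    measurable_prodMk_left.aemeasurable]
  rfl

lemma integral_dirac_prod [NormedSpace ℝ E] (hf : StronglyMeasurable f) :
    ∫ p, f p ∂(Measure.dirac a).prod ν = ∫ y, f (a, y) ∂ν := by
  rw [Measure.dirac_prod, integral_map measurable_prodMk_left.aemeasurable hf.aestronglyMeasurable]

end DiracProd

lemma integrable_id_gaussianReal (μ : ℝ) (v : ℝ≥0) :
    Integrable (fun x : ℝ ↦ x) (gaussianReal μ v) :=
  (memLp_id_gaussianReal 1).integrable le_rfl

lemma integrable_gmodel_gaussianReal (a μ : ℝ) (v : ℝ≥0) :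
    Integrable (gmodel a) (gaussianReal μ v) :=
  (integrable_const a).add ((integrable_id_gaussianReal μ v).const_mul 2)

lemma integral_gmodel_gaussianReal (a μ : ℝ) (v : ℝ≥0) :
    ∫ y, gmodel a y ∂gaussianReal μ v = a + 2 * μ := by
  simp only [gmodel]
  rw [integral_add (integrable_const a) ((integrable_id_gaussianReal μ v).const_mul 2), integral_const_mul,
    integral_id_gaussianReal, integral_const, probReal_univ, one_smul]

lemma integral_gmodel_lawX3 (x₄ : ℝ) : ∫ x₃, gmodel x₃ x₄ ∂lawX3 = 2 * x₄ := by
  rw [lawX3, integral_half_smul_add_half_smul (integrable_dirac (by simp))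
    (integrable_dirac (by simp)), integral_dirac, integral_dirac, gmodel, gmodel]
  ring

lemma integral_gmodel_lawX34 : ∫ p, gmodel p.1 p.2 ∂lawX34 = 0 := by
  have hf : StronglyMeasurable fun p : ℝ × ℝ ↦ gmodel p.1 p.2 := by
    unfold gmodel; fun_prop
  have hint (s : ℝ) := (integrable_dirac_prod_iff s (gaussianReal s 1) hf).2
    (integrable_gmodel_gaussianReal s s 1)
  rw [lawX34, integral_half_smul_add_half_smul (hint (-1)) (hint 1),
    integral_dirac_prod _ _ hf, integral_dirac_prod _ _ hf,
    integral_gmodel_gaussianReal, integral_gmodel_gaussianReal]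
  ring

lemma stdNormalPdf_sub (x t : ℝ) :
    stdNormalPdf (x - t) = stdNormalPdf x * exp (-(t ^ 2 / 2)) * exp (t * x) := by
  rw [stdNormalPdf, stdNormalPdf, div_mul_eq_mul_div, div_mul_eq_mul_div, ← exp_add, ← exp_add]
  ring_nf

lemma condExpX3_eq_tanh (x : ℝ) : condExpX3 x = tanh x := by
  have hminus := stdNormalPdf_sub x 1
  have hplus := stdNormalPdf_sub x (-1)
  simp only [sub_neg_eq_add, one_mul, neg_one_mul, one_pow, neg_one_sq] at hminus hplus
  have hpos : 0 < stdNormalPdf x * exp (-(1 / 2)) := by unfold stdNormalPdf; positivity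
  rw [condExpX3, hminus, hplus, ← mul_sub, ← mul_add, mul_div_mul_left _ _ hpos.ne', tanh_eq]

/-- Marginal vs. conditional pure local effects of `X₄`: globally they disagree by
`E[X₃ | X₄ = x₄] = tanh x₄`; on the region `{x₃ = 1}` they agree. -/
theorem distribution_disagreement_example :
    (∀ x₄ : ℝ,
      (∫ x₃, gmodel x₃ x₄ ∂lawX3) - (∫ p, gmodel p.1 p.2 ∂lawX34) = 2 * x₄) ∧
    (∀ x₄ : ℝ, condExpX3 x₄ = Real.tanh x₄) ∧
    (∀ x₄ : ℝ,
      ((condExpX3 x₄ + 2 * x₄) - (∫ p, gmodel p.1 p.2 ∂lawX34))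
        = 2 * x₄ + Real.tanh x₄) ∧
    (∀ x₄ : ℝ,
      ((∫ x₃, gmodel x₃ x₄ ∂(Measure.dirac (1 : ℝ)))
          - (∫ x₄', gmodel 1 x₄' ∂(gaussianReal 1 1)))
        = (2 * x₄ + 1) - (∫ x₄', gmodel 1 x₄' ∂(gaussianReal 1 1))) := by
  refine ⟨fun x₄ ↦ ?_, condExpX3_eq_tanh, fun x₄ ↦ ?_, fun x₄ ↦ ?_⟩
  · rw [integral_gmodel_lawX3, integral_gmodel_lawX34, sub_zero]
  · rw [integral_gmodel_lawX34, condExpX3_eq_tanh]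
    ring
  · rw [integral_dirac, gmodel]
    ring
end
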